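/- If a vector sublattice S of a vector lattice Z is regular, then every net in S that uo-converges to 0 in S also uo-converges to 0 in Z. -/

import Mathlib

set_option linter.unusedSectionVars false
set_option maxHeartbeats 1000000

open Filter Set

section ODual

variable (E : Type*) [AddCommGroup E] [Preorder E] [Module ℝ E]

/-- The order (bounded) dual: linear functionals bounded on order intervals. -/
noncomputable def obDual : Submodule ℝ (E →ₗ[ℝ] ℝ) where
  carrier := {f | ∀ w : E, ∃ M : ℝ, ∀ x : E, -w ≤ x → x ≤ w → |f x| ≤ M}
  zero_mem' := fun w => ⟨0, fun x _ _ => by simp⟩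
  add_mem' := fun {f g} hf hg w => by
    obtain ⟨M, hM⟩ := hf w
    obtain ⟨N, hN⟩ := hg w
    refine ⟨M + N, fun x h1 h2 => ?_⟩
    calc |(f + g) x| = |f x + g x| := by simp
    _ ≤ |f x| + |g x| := abs_add_le _ _
    _ ≤ M + N := add_le_add (hM x h1 h2) (hN x h1 h2)
  smul_mem' := fun c f hf => by
    intro w
    obtain ⟨M, hM⟩ := hf w
    refine ⟨|c| * M, fun x h1 h2 => ?_⟩
    calc |(c • f) x| = |c| * |f x| := by simp [abs_mul]
    _ ≤ |c| * M := mul_le_mul_of_nonneg_left (hM x h1 h2) (abs_nonneg c)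

/-- The pointwise-on-positive-elements (pre)order on a space of functionals. -/
instance instSubPre (Y : Submodule ℝ (E →ₗ[ℝ] ℝ)) : Preorder Y where
  le f g := ∀ x : E, 0 ≤ x → (f : E →ₗ[ℝ] ℝ) x ≤ (g : E →ₗ[ℝ] ℝ) x
  le_refl f x _ := le_rfl
  le_trans f g h h1 h2 x hx := (h1 x hx).trans (h2 x hx)

variable {E}

theorem subPre_le_iff {Y : Submodule ℝ (E →ₗ[ℝ] ℝ)} {f g : Y} :
    f ≤ g ↔ ∀ x : E, 0 ≤ x → (f : E →ₗ[ℝ] ℝ) x ≤ (g : E →ₗ[ℝ] ℝ) x := Iff.rfl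

/-- Order convergence of a net to a limit (sandwich form: eventually
`l - d ≤ x_α ≤ l + d` for every `d` in a set directed downward to `0`). -/
def OConvTo {ι : Type*} [Preorder ι] (x : ι → E) (l : E) : Prop :=
  ∃ D : Set E, D.Nonempty ∧ DirectedOn (· ≥ ·) D ∧ IsGLB D 0 ∧
    ∀ d ∈ D, ∃ α₀ : ι, ∀ α, α₀ ≤ α → l - d ≤ x α ∧ x α ≤ l + d

/-- Order continuity of a linear functional: `f(x_α) → 0` whenever `x_α ↓ 0`. -/
def OrdContE (f : E →ₗ[ℝ] ℝ) : Prop :=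
  ∀ D : Set E, D.Nonempty → DirectedOn (· ≥ ·) D → IsGLB D 0 →
    ∀ ε : ℝ, 0 < ε → ∃ d ∈ D, ∀ e ∈ D, e ≤ d → |f e| < ε

end ODual

section VL

variable (X : Type*) [Lattice X] [AddCommGroup X]
  [CovariantClass X X (· + ·) (· ≤ ·)] [Module ℝ X] [PosSMulMono ℝ X]

variable {X} in
/-- Unbounded order convergence: `|x_α - l| ⊓ u →o 0` for every `u ≥ 0`. -/
def uoConvTo {ι : Type*} [Preorder ι] (x : ι → X) (l : X) : Prop :=
  ∀ u : X, 0 ≤ u → OConvTo (fun α => |x α - l| ⊓ u) (0 : X)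

/-- The canonical evaluation of `x ∈ X` on a space `Y` of functionals on `X`. -/
def hatFun (Y : Submodule ℝ (X →ₗ[ℝ] ℝ)) (x : X) : Y →ₗ[ℝ] ℝ where
  toFun f := (f : X →ₗ[ℝ] ℝ) x
  map_add' f g := by simp
  map_smul' c f := by simp

theorem hatFun_mem (Y : Submodule ℝ (X →ₗ[ℝ] ℝ)) (x : X) :
    hatFun X Y x ∈ obDual Y := by
  intro w
  refine ⟨(w : X →ₗ[ℝ] ℝ) (x⁺) + (w : X →ₗ[ℝ] ℝ) (x⁻), fun f h1 h2 => ?_⟩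
  have hp : (0 : X) ≤ x⁺ := posPart_nonneg x
  have hn : (0 : X) ≤ x⁻ := negPart_nonneg x
  have e1 := (subPre_le_iff.mp h1) _ hp
  have e2 := (subPre_le_iff.mp h2) _ hp
  have e3 := (subPre_le_iff.mp h1) _ hn
  have e4 := (subPre_le_iff.mp h2) _ hn
  have c1 : -((w : X →ₗ[ℝ] ℝ) (x⁺)) ≤ (f : X →ₗ[ℝ] ℝ) (x⁺) := by simpa using e1
  have c3 : -((w : X →ₗ[ℝ] ℝ) (x⁻)) ≤ (f : X →ₗ[ℝ] ℝ) (x⁻) := by simpa using e3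
  have key : (f : X →ₗ[ℝ] ℝ) x
      = (f : X →ₗ[ℝ] ℝ) (x⁺) - (f : X →ₗ[ℝ] ℝ) (x⁻) := by
    rw [← map_sub, posPart_sub_negPart]
  show |(f : X →ₗ[ℝ] ℝ) x| ≤ _
  rw [key]
  have a1 : |(f : X →ₗ[ℝ] ℝ) (x⁺)| ≤ (w : X →ₗ[ℝ] ℝ) (x⁺) := abs_le.mpr ⟨c1, e2⟩
  have a2 : |(f : X →ₗ[ℝ] ℝ) (x⁻)| ≤ (w : X →ₗ[ℝ] ℝ) (x⁻) := abs_le.mpr ⟨c3, e4⟩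
  have := abs_sub ((f : X →ₗ[ℝ] ℝ) (x⁺)) ((f : X →ₗ[ℝ] ℝ) (x⁻))
  linarith

/-- The canonical embedding of `X` into the order dual of `Y ⊆ X~`. -/
def hatEl (Y : Submodule ℝ (X →ₗ[ℝ] ℝ)) (x : X) : obDual Y :=
  ⟨hatFun X Y x, hatFun_mem X Y x⟩

/-- `X~` separates the points of `X`. -/
def SepPoints : Prop := ∀ x : X, x ≠ 0 → ∃ f : obDual X, (f : X →ₗ[ℝ] ℝ) x ≠ 0

noncomputable instance instBidualPre : Preorder ↥(obDual ↥(obDual X)) :=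
  instSubPre (obDual X) (obDual (obDual X))

/-- The canonical image of `X` in `X~~` is a regular sublattice:
`x_α ↓ 0` in `X` implies `x̂_α ↓ 0` in `X~~`. -/
def HatRegular : Prop :=
  ∀ D : Set X, D.Nonempty → DirectedOn (· ≥ ·) D → IsGLB D 0 →
    IsGLB (hatEl X (obDual X) '' D) (0 : obDual ↥(obDual X))

variable {X} in
/-- The net `x̂_α` is eventually order bounded in `X~~`. -/
def HatEvOB {ι : Type*} [Preorder ι] (x : ι → X) : Prop :=
  ∃ (b t : obDual ↥(obDual X)) (α₀ : ι), ∀ α, α₀ ≤ α →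
    b ≤ hatEl X (obDual X) (x α) ∧ hatEl X (obDual X) (x α) ≤ t

variable {X} in
/-- Bidual bounded uo-convergence. -/
def bbuoConvTo {ι : Type*} [Preorder ι] (x : ι → X) (l : X) : Prop :=
  uoConvTo x l ∧ HatEvOB x

/-- `X` has the `b`-property: every subset of `X` whose canonical image is
order bounded in `X~~` is order bounded in `X`. -/
def HasBProp : Prop :=
  ∀ A : Set X,
    (∃ b t : obDual ↥(obDual X), ∀ a ∈ A,
        b ≤ hatEl X (obDual X) a ∧ hatEl X (obDual X) a ≤ t) →
    ∃ b t : X, ∀ a ∈ A, b ≤ a ∧ a ≤ t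

/-- The Archimedean property for a lattice-ordered group. -/
def IsArch : Prop := ∀ x y : X, 0 ≤ x → (∀ n : ℕ, n • x ≤ y) → x = 0

end VL


/-!
Put `z α = |x α| ⊓ u` and let `D` be the set of nonnegative eventual upper bounds of `z`;
it contains `u`, and it suffices to show that `0 ≤ s ≤ D` forces `s = 0`. For `v ∈ S₊`,
uo-convergence in `S` and regularity give `s ≤ (u - v)⁺`. Taking `v = n • w`, the
Archimedean property makes `s` disjoint from every `w ∈ S₊`, in particular from `|x α|`.
Disjointness lets `s` be subtracted from any element of `D`, so `u - n • s ∈ D` for all `n`,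
and `s = 0` by the Archimedean property again.
-/

section EventualUpperBounds

variable {ι Z : Type*} [Preorder ι]

def eventualUpperBounds [Preorder Z] [Zero Z] (z : ι → Z) : Set Z :=
  {d | 0 ≤ d ∧ ∃ α₀, ∀ α, α₀ ≤ α → z α ≤ d}

theorem directedOn_eventualUpperBounds [IsDirected ι (· ≤ ·)] [Lattice Z] [Zero Z]
    (z : ι → Z) : DirectedOn (· ≥ ·) (eventualUpperBounds z) := by
  rintro d₁ ⟨hd₁, α₁, h₁⟩ d₂ ⟨hd₂, α₂, h₂⟩
  obtain ⟨α₀, hα₁, hα₂⟩ := directed_of (· ≤ ·) α₁ α₂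
  exact ⟨d₁ ⊓ d₂, ⟨le_inf hd₁ hd₂, α₀, fun α hα =>
    le_inf (h₁ α (hα₁.trans hα)) (h₂ α (hα₂.trans hα))⟩, inf_le_left, inf_le_right⟩

theorem oConvTo_zero_of_isGLB_eventualUpperBounds [IsDirected ι (· ≤ ·)] [Lattice Z]
    [AddCommGroup Z] [AddLeftMono Z] {z : ι → Z} (hz : ∀ α, 0 ≤ z α)
    (hne : (eventualUpperBounds z).Nonempty) (hglb : IsGLB (eventualUpperBounds z) 0) :
    OConvTo z 0 := by
  refine ⟨_, hne, directedOn_eventualUpperBounds z, hglb, ?_⟩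
  rintro d ⟨hd, α₀, hα₀⟩
  refine ⟨α₀, fun α hα => ⟨?_, ?_⟩⟩
  · simpa using (neg_nonpos.mpr hd).trans (hz α)
  · simpa using hα₀ α hα

end EventualUpperBounds

theorem isGLB_zero_of_forall_nonneg_lowerBound {Z : Type*} [Lattice Z] [Zero Z] {D : Set Z}
    (hD : ∀ d ∈ D, 0 ≤ d) (h : ∀ s ∈ lowerBounds D, 0 ≤ s → s = 0) : IsGLB D 0 := by
  refine ⟨hD, fun s hs => ?_⟩
  have hs' : s ⊔ 0 ∈ lowerBounds D := fun d hd => sup_le (hs hd) (hD d hd)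
  exact le_sup_left.trans (h _ hs' le_sup_right).le

section LatticeOrderedGroup

variable {Z : Type*} [Lattice Z] [AddCommGroup Z] [AddLeftMono Z]

theorem inf_le_inf_add_posPart_sub (a u v : Z) : a ⊓ u ≤ a ⊓ v + (u - v)⁺ :=
  calc a ⊓ u ≤ a ⊓ (v + (u - v)⁺) := inf_le_inf_left a <| by
          simpa using add_le_add_right (le_posPart (u - v)) v
    _ ≤ (a + (u - v)⁺) ⊓ (v + (u - v)⁺) :=
          inf_le_inf_right _ (le_add_of_nonneg_right (posPart_nonneg _))
    _ = a ⊓ v + (u - v)⁺ := (inf_add _ _ _).symm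

theorem eq_zero_of_forall_le_posPart_sub_nsmul (harch : IsArch Z) {t : Z} (u : Z)
    (ht : 0 ≤ t) (h : ∀ n : ℕ, t ≤ (u - n • t)⁺) : t = 0 := by
  refine harch t u⁺ ht fun n => ?_
  induction n with
  | zero => simp
  | succ n ih =>
    calc (n + 1) • t = n • t + t := succ_nsmul t n
      _ ≤ n • t + (u - n • t)⁺ := add_le_add_right (h n) _
      _ = u ⊔ n • t := by rw [posPart_def, add_sup, add_sub_cancel, add_zero]
      _ ≤ u⁺ := sup_le (le_posPart u) ih

theorem inf_eq_zero_of_forall_le_posPart_sub_nsmul (harch : IsArch Z) {s w : Z} (u : Z)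
    (hs : 0 ≤ s) (hw : 0 ≤ w) (h : ∀ n : ℕ, s ≤ (u - n • w)⁺) : s ⊓ w = 0 := by
  refine eq_zero_of_forall_le_posPart_sub_nsmul harch u (le_inf hs hw) fun n => ?_
  calc s ⊓ w ≤ s := inf_le_left
    _ ≤ (u - n • w)⁺ := h n
    _ ≤ (u - n • (s ⊓ w))⁺ :=
        posPart_mono (sub_le_sub_left (nsmul_le_nsmul_right inf_le_right n) u)

variable {ι : Type*} [Preorder ι]

theorem add_posPart_sub_mem_eventualUpperBounds {a : ι → Z} {u v e : Z}
    (he : e ∈ eventualUpperBounds fun α => a α ⊓ v) :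
    e + (u - v)⁺ ∈ eventualUpperBounds fun α => a α ⊓ u := by
  obtain ⟨he, α₀, hα₀⟩ := he
  exact ⟨add_nonneg he (posPart_nonneg _), α₀, fun α hα =>
    (inf_le_inf_add_posPart_sub _ _ _).trans (add_le_add_left (hα₀ α hα) _)⟩

theorem le_posPart_sub_of_mem_lowerBounds {a : ι → Z} {u v s : Z} {E : Set Z}
    (hE : IsGLB E 0) (hEv : E ⊆ eventualUpperBounds fun α => a α ⊓ v)
    (hs : s ∈ lowerBounds (eventualUpperBounds fun α => a α ⊓ u)) : s ≤ (u - v)⁺ :=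
  sub_nonpos.mp <| hE.2 fun _ he =>
    sub_le_iff_le_add.mpr (hs (add_posPart_sub_mem_eventualUpperBounds (hEv he)))

theorem sub_mem_eventualUpperBounds {z : ι → Z} {s d : Z}
    (hs : s ∈ lowerBounds (eventualUpperBounds z)) (hdisj : ∀ α, s ⊓ z α = 0)
    (hd : d ∈ eventualUpperBounds z) : d - s ∈ eventualUpperBounds z := by
  have hsd : s ≤ d := hs hd
  refine ⟨sub_nonneg.mpr hsd, ?_⟩
  obtain ⟨-, α₀, hα₀⟩ := hd
  refine ⟨α₀, fun α hα => le_sub_iff_add_le.mpr ?_⟩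
  calc z α + s = s ⊓ z α + s ⊔ z α := by rw [inf_add_sup, add_comm]
    _ = s ⊔ z α := by rw [hdisj, zero_add]
    _ ≤ d := sup_le hsd (hα₀ α hα)

theorem eq_zero_of_mem_lowerBounds_of_forall_inf_eq_zero (harch : IsArch Z) {z : ι → Z}
    {s u : Z} (hu : u ∈ eventualUpperBounds z) (hs : s ∈ lowerBounds (eventualUpperBounds z))
    (hs₀ : 0 ≤ s) (hdisj : ∀ α, s ⊓ z α = 0) : s = 0 := by
  have hmem : ∀ n : ℕ, u - n • s ∈ eventualUpperBounds z := by
    intro n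
    induction n with
    | zero => simpa using hu
    | succ n ih => simpa [succ_nsmul, sub_add_eq_sub_sub] using
        sub_mem_eventualUpperBounds hs hdisj ih
  exact harch s u hs₀ fun n => sub_nonneg.mp (hmem n).1

end LatticeOrderedGroup

theorem statement9_general {Z : Type u} [Lattice Z] [AddCommGroup Z]
    [CovariantClass Z Z (· + ·) (· ≤ ·)] [Module ℝ Z]
    (harch : IsArch Z)
    (S : Submodule ℝ Z) (hsub : ∀ x ∈ S, ∀ y ∈ S, x ⊔ y ∈ S)
    (hregS : ∀ D : Set Z, D ⊆ (S : Set Z) → D.Nonempty → DirectedOn (· ≥ ·) D →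
      (∀ d ∈ D, 0 ≤ d) → (∀ s ∈ S, (∀ d ∈ D, s ≤ d) → s ≤ 0) → IsGLB D 0)
    {ι : Type v} [Preorder ι] [Nonempty ι] [IsDirected ι (· ≤ ·)]
    (x : ι → Z) (hxS : ∀ α, x α ∈ S)
    (huoS : ∀ u : Z, u ∈ S → 0 ≤ u →
      ∃ D : Set Z, D ⊆ (S : Set Z) ∧ D.Nonempty ∧ DirectedOn (· ≥ ·) D ∧
        (∀ d ∈ D, 0 ≤ d) ∧ (∀ s ∈ S, (∀ d ∈ D, s ≤ d) → s ≤ 0) ∧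
        ∀ d ∈ D, ∃ α₀ : ι, ∀ α, α₀ ≤ α → |x α| ⊓ u ≤ d) :
    uoConvTo x 0 := by
  intro u hu
  simp only [sub_zero]
  have hz : ∀ α, 0 ≤ |x α| ⊓ u := fun α => le_inf (abs_nonneg _) hu
  have hu_mem : u ∈ eventualUpperBounds fun α => |x α| ⊓ u :=
    ⟨hu, Classical.arbitrary ι, fun _ _ => inf_le_right⟩
  refine oConvTo_zero_of_isGLB_eventualUpperBounds hz ⟨u, hu_mem⟩ <|
    isGLB_zero_of_forall_nonneg_lowerBound (fun d hd => hd.1) fun s hs hs₀ => ?_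
  have hle : ∀ v ∈ S, 0 ≤ v → s ≤ (u - v)⁺ := by
    intro v hvS hv
    obtain ⟨E, hES, hEne, hEdir, hEpos, hEinf, htail⟩ := huoS v hvS hv
    exact le_posPart_sub_of_mem_lowerBounds (hregS E hES hEne hEdir hEpos hEinf)
      (fun e he => ⟨hEpos e he, htail e he⟩) hs
  have hdisj : ∀ α, s ⊓ (|x α| ⊓ u) = 0 := by
    intro α
    have habs : |x α| ∈ S := hsub _ (hxS α) _ (S.neg_mem (hxS α))
    have h : s ⊓ |x α| = 0 := inf_eq_zero_of_forall_le_posPart_sub_nsmul harch u hs₀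
      (abs_nonneg _) fun n => hle _ (S.nsmul_mem habs n) (nsmul_nonneg (abs_nonneg _) n)
    exact le_antisymm (h ▸ inf_le_inf_left s inf_le_left) (le_inf hs₀ (hz α))
  exact eq_zero_of_mem_lowerBounds_of_forall_inf_eq_zero harch hu_mem hs hs₀ hdisj

/-- A net in a regular sublattice `S` of `Z` that uo-converges to `0` in `S`
also uo-converges to `0` in `Z`. -/
theorem statement9 {Z : Type u} [Lattice Z] [AddCommGroup Z]
    [CovariantClass Z Z (· + ·) (· ≤ ·)] [Module ℝ Z] [PosSMulMono ℝ Z]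
    (harch : IsArch Z)
    (S : Submodule ℝ Z) (hsub : ∀ x ∈ S, ∀ y ∈ S, x ⊔ y ∈ S)
    (hregS : ∀ D : Set Z, D ⊆ (S : Set Z) → D.Nonempty → DirectedOn (· ≥ ·) D →
      (∀ d ∈ D, 0 ≤ d) → (∀ s ∈ S, (∀ d ∈ D, s ≤ d) → s ≤ 0) → IsGLB D 0)
    {ι : Type v} [Preorder ι] [Nonempty ι] [IsDirected ι (· ≤ ·)]
    (x : ι → Z) (hxS : ∀ α, x α ∈ S)
    (huoS : ∀ u : Z, u ∈ S → 0 ≤ u →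
      ∃ D : Set Z, D ⊆ (S : Set Z) ∧ D.Nonempty ∧ DirectedOn (· ≥ ·) D ∧
        (∀ d ∈ D, 0 ≤ d) ∧ (∀ s ∈ S, (∀ d ∈ D, s ≤ d) → s ≤ 0) ∧
        ∀ d ∈ D, ∃ α₀ : ι, ∀ α, α₀ ≤ α → |x α| ⊓ u ≤ d) :
    uoConvTo x 0 :=
  statement9_general harch S hsub hregS x hxS huoS
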